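/- Let G = (V,E) be a simple undirected graph and let S = {S₁, …, S_k} be an m-separated collection of subsets of V with m ≥ 2. For each i, let L*(S_i) denote a minimum liar's vertex-edge dominating set of the edges of the subgraph of G induced by S_i (where domination is taken with closed neighbourhoods in G), and let L*(V) be a minimum liar's vertex-edge dominating set of G. Then Σ_{i=1}^{k} |L*(S_i)| ≤ |L*(V)|. -/

import Mathlib

open SimpleGraph Set

/-- The closed neighbourhood of an edge `e = uv`: `N_G[u] ∪ N_G[v]`. -/
def edgeNbhd {V : Type*} (G : SimpleGraph V) (e : Sym2 V) : Set V :=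
  {x | ∃ y ∈ e, x = y ∨ G.Adj y x}

/-- `L` is a liar's vertex-edge dominating set of the edge set `F` (neighbourhoods in `G`). -/
def IsLiarVEDomOf {V : Type*} (G : SimpleGraph V) (F : Set (Sym2 V)) (L : Set V) : Prop :=
  (∀ e ∈ F, 2 ≤ (edgeNbhd G e ∩ L).ncard) ∧
  (∀ e ∈ F, ∀ e' ∈ F, e ≠ e' →
    3 ≤ ((edgeNbhd G e ∪ edgeNbhd G e') ∩ L).ncard)

/-- `L` is a liar's vertex-edge dominating set of `G`. -/
def IsLiarVEDom {V : Type*} (G : SimpleGraph V) (L : Set V) : Prop :=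
  IsLiarVEDomOf G G.edgeSet L

/-- Edges of the subgraph of `G` induced by `S`. -/
def inducedEdges {V : Type*} (G : SimpleGraph V) (S : Set V) : Set (Sym2 V) :=
  {e ∈ G.edgeSet | ∀ x ∈ e, x ∈ S}

/-!
The trace of a minimum liar's ve-dominating set `L*(V)` on the closed neighbourhood `N[S_i]`
still liar's ve-dominates the edges induced by `S_i`, because the neighbourhoods of those edges
lie inside `N[S_i]`; hence `|L*(S_i)| ≤ |L*(V) ∩ N[S_i]|`. Since the `S_i` are more than two
apart, the sets `N[S_i]` are pairwise disjoint, and summing gives `∑ |L*(S_i)| ≤ |L*(V)|`.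
-/

open scoped Function

namespace SimpleGraph

variable {V : Type*} (G : SimpleGraph V)

def closedNbhdSet (S : Set V) : Set V :=
  {x | ∃ y ∈ S, x = y ∨ G.Adj y x}

variable {G}

lemma edgeNbhd_subset_closedNbhdSet {S : Set V} {e : Sym2 V} (he : e ∈ inducedEdges G S) :
    edgeNbhd G e ⊆ G.closedNbhdSet S := by
  rintro x ⟨y, hy, hxy⟩
  exact ⟨y, he.2 y hy, hxy⟩

lemma edist_le_one_of_eq_or_adj {y x : V} (h : x = y ∨ G.Adj y x) : G.edist y x ≤ 1 :=
  edist_le_one_iff_adj_or_eq.mpr (h.symm.imp id Eq.symm)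

lemma disjoint_closedNbhdSet {S S' : Set V} (h : ∀ u ∈ S, ∀ v ∈ S', 2 < G.edist u v) :
    Disjoint (G.closedNbhdSet S) (G.closedNbhdSet S') := by
  rw [Set.disjoint_left]
  rintro x ⟨u, hu, hux⟩ ⟨v, hv, hvx⟩
  have : G.edist u v ≤ 2 :=
    calc G.edist u v ≤ G.edist u x + G.edist x v := G.edist_triangle
      _ ≤ 1 + 1 := by
        gcongr
        · exact edist_le_one_of_eq_or_adj hux
        · exact G.edist_comm ▸ edist_le_one_of_eq_or_adj hvx
      _ = 2 := by norm_num
  exact (h u hu v hv).not_ge this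

end SimpleGraph

lemma IsLiarVEDomOf.inter_of_edgeNbhd_subset {V : Type*} {G : SimpleGraph V}
    {F F' : Set (Sym2 V)} {L T : Set V} (hL : IsLiarVEDomOf G F L) (hF' : F' ⊆ F)
    (hT : ∀ e ∈ F', edgeNbhd G e ⊆ T) : IsLiarVEDomOf G F' (L ∩ T) := by
  have trace_eq : ∀ A : Set V, A ⊆ T → A ∩ (L ∩ T) = A ∩ L := fun A hA => by
    rw [inter_comm L T, ← inter_assoc, inter_eq_left.mpr hA]
  refine ⟨fun e he => ?_, fun e he e' he' hne => ?_⟩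
  · rw [trace_eq _ (hT e he)]
    exact hL.1 e (hF' he)
  · rw [trace_eq _ (union_subset (hT e he) (hT e' he'))]
    exact hL.2 e (hF' he) e' (hF' he') hne

lemma Set.sum_ncard_inter_le {α ι : Type*} [Fintype ι] {L : Set α} (hL : L.Finite)
    {T : ι → Set α} (hT : Pairwise (Disjoint on T)) :
    ∑ i, (L ∩ T i).ncard ≤ L.ncard := by
  have hdisj : Pairwise (Disjoint on fun i => L ∩ T i) := fun i j hij =>
    (hT hij).mono inter_subset_right inter_subset_right
  rw [← finsum_eq_sum_of_fintype,
    ← ncard_iUnion_of_finite (fun i => hL.subset inter_subset_left) hdisj]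
  exact ncard_le_ncard (iUnion_subset fun _ => inter_subset_left) hL

theorem stmt_2_general {V : Type*} [Fintype V] (G : SimpleGraph V) (m : ℕ) (hm : 2 ≤ m)
    (k : ℕ) (S : Fin k → Set V)
    (hsep : ∀ i j, i ≠ j → ∀ u ∈ S i, ∀ v ∈ S j, (m : ℕ∞) < G.edist u v)
    (Lopt : Fin k → Set V)
    (hLoptMin : ∀ i, ∀ L' : Set V, IsLiarVEDomOf G (inducedEdges G (S i)) L' →
      (Lopt i).ncard ≤ L'.ncard)
    (LV : Set V) (hLV : IsLiarVEDom G LV) :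
    ∑ i : Fin k, (Lopt i).ncard ≤ LV.ncard := by
  have hle : ∀ i, (Lopt i).ncard ≤ (LV ∩ G.closedNbhdSet (S i)).ncard := fun i =>
    hLoptMin i _ (hLV.inter_of_edgeNbhd_subset (fun _ he => he.1)
      (fun _ he => edgeNbhd_subset_closedNbhdSet he))
  have hdisj : Pairwise (Disjoint on fun i => G.closedNbhdSet (S i)) := fun i j hij =>
    disjoint_closedNbhdSet fun u hu v hv =>
      lt_of_le_of_lt (by exact_mod_cast hm) (hsep i j hij u hu v hv)
  calc ∑ i, (Lopt i).ncard ≤ ∑ i, (LV ∩ G.closedNbhdSet (S i)).ncard :=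
        Finset.sum_le_sum fun i _ => hle i
    _ ≤ LV.ncard := sum_ncard_inter_le (toFinite LV) hdisj

theorem stmt_2 {V : Type*} [Fintype V] (G : SimpleGraph V) (m : ℕ) (hm : 2 ≤ m)
    (k : ℕ) (S : Fin k → Set V)
    (hdisj : ∀ i j, i ≠ j → Disjoint (S i) (S j))
    (hsep : ∀ i j, i ≠ j → ∀ u ∈ S i, ∀ v ∈ S j, (m : ℕ∞) < G.edist u v)
    (Lopt : Fin k → Set V)
    (hLopt : ∀ i, IsLiarVEDomOf G (inducedEdges G (S i)) (Lopt i))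
    (hLoptMin : ∀ i, ∀ L' : Set V, IsLiarVEDomOf G (inducedEdges G (S i)) L' →
      (Lopt i).ncard ≤ L'.ncard)
    (LV : Set V) (hLV : IsLiarVEDom G LV)
    (hLVMin : ∀ L' : Set V, IsLiarVEDom G L' → LV.ncard ≤ L'.ncard) :
    ∑ i : Fin k, (Lopt i).ncard ≤ LV.ncard :=
  stmt_2_general G m hm k S hsep Lopt hLoptMin LV hLV
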